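/- Let D be a positive, 1-periodic, C² function, let r₀ > 0 be a constant, and let q ∈ ℝ. Suppose that for every λ > 0 we are given a principal eigenpair (k(λ), ψ_λ) of L_q^λ[r₀;D]. Then inf_{λ>0} k(λ)/λ ≤ 2√(r₀)·a, where a := (∫₀¹ D(t)^{−1/2} dt)^{−1}. That is, for constant growth rate the spreading speed is maximal for the Stratonovich diffusion q = 1/2, where it equals 2√(r₀)·a. -/

import Mathlib

open Real MeasureTheory Set Filter Topology

noncomputable section

/-- The operator `L_q^λ[r;D]` acting on C² functions `ψ`:
`(L_q^λ[r;D]ψ)(x) = D ψ'' + ((1+q)D' − 2λD) ψ' + (qD'' + λ²D − (1+q)λD' + r) ψ`. -/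
def Lop (q lam : ℝ) (r D ψ : ℝ → ℝ) (x : ℝ) : ℝ :=
  D x * deriv (deriv ψ) x + ((1 + q) * deriv D x - 2 * lam * D x) * deriv ψ x +
    (q * deriv (deriv D) x + lam ^ 2 * D x - (1 + q) * lam * deriv D x + r x) * ψ x

/-- `(k, ψ)` is a principal eigenpair of `L_q^λ[r;D]`: `ψ` is a positive, 1-periodic,
C² function with `L_q^λ[r;D]ψ = kψ`. -/
def IsEigenpair (q lam : ℝ) (r D : ℝ → ℝ) (k : ℝ) (ψ : ℝ → ℝ) : Prop :=
  ContDiff ℝ 2 ψ ∧ (∀ x, 0 < ψ x) ∧ Function.Periodic ψ 1 ∧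
    ∀ x, Lop q lam r D ψ x = k * ψ x

/-- The Freidlin–Gärtner infimum `inf_{λ>0} k(λ)/λ`, as an extended real number. -/
def speed (k : ℝ → ℝ) : EReal := ⨅ l : {l : ℝ // 0 < l}, ((k l.1 / l.1 : ℝ) : EReal)

/-! Take `λ = √r₀ · ∫₀¹ D^{-1/2}`. The flux `N = Dψ' + (qD' - λD)ψ` satisfies
`N' = λN + (k - r₀)ψ`, so if `μ = k - r₀ > 0` then `N e^{-λx}` is strictly increasing and
periodicity forces `N < 0`. Then `f = -N/(Dψ)` and `g = ψ/(-N)` are positive with `fg = 1/D`,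
and since both are logarithmic derivatives of periodic functions up to constants,
`∫₀¹ f = λ` and `∫₀¹ g = λ/μ`. The AM–GM inequality `√(fg) ≤ f/(2√μ) + √μ g/2` integrates to
`∫₀¹ D^{-1/2} ≤ λ/√μ`, that is `k ≤ r₀ + (λ / ∫₀¹ D^{-1/2})²`, which is `k ≤ 2r₀` at the
chosen `λ`. -/

theorem Function.Periodic.deriv {𝕜 F : Type*} [NontriviallyNormedField 𝕜] [NormedAddCommGroup F]
    [NormedSpace 𝕜 F] {f : 𝕜 → F} {c : 𝕜} (hf : Function.Periodic f c) :
    Function.Periodic (_root_.deriv f) c := fun x => by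
  rw [← deriv_comp_add_const, funext hf]

theorem integral_div_self_eq_zero_of_periodic {u u' : ℝ → ℝ} {T : ℝ}
    (hper : Function.Periodic u T) (hu : ∀ x, HasDerivAt u (u' x) x) (hu' : Continuous u')
    (hne : ∀ x, u x ≠ 0) : ∫ x in (0:ℝ)..T, u' x / u x = 0 := by
  have hcont : Continuous u := continuous_iff_continuousAt.2 fun x => (hu x).continuousAt
  rw [intervalIntegral.integral_eq_sub_of_hasDerivAt (f := fun x => Real.log (u x))
    (fun x _ => (hu x).log (hne x)) ((hu'.div hcont hne).intervalIntegrable _ _),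
    ← zero_add T, hper 0, sub_self]

theorem Function.Periodic.neg_of_mul_lt_deriv {N N' : ℝ → ℝ} {T lam : ℝ}
    (hper : Function.Periodic N T) (hT : 0 < T) (hlam : 0 < lam)
    (hN : ∀ x, HasDerivAt N (N' x) x) (hlt : ∀ x, lam * N x < N' x) (x : ℝ) : N x < 0 := by
  have hmono : StrictMono fun y => N y * exp (-lam * y) := by
    refine strictMono_of_hasDerivAt_pos (f' := fun y => (N' y - lam * N y) * exp (-lam * y))
      (fun y => ?_) (fun y => mul_pos (sub_pos.2 (hlt y)) (exp_pos _))
    exact ((hN y).mul ((hasDerivAt_id' y).const_mul (-lam)).exp).congr_deriv (by ring)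
  have hshift := hmono (lt_add_of_pos_right x hT)
  simp only [hper x, mul_add, exp_add] at hshift
  have hdecay : 0 < exp (-lam * x) * (1 - exp (-lam * T)) :=
    mul_pos (exp_pos _) (sub_pos.2 (exp_lt_one_iff.2 (by nlinarith)))
  nlinarith

theorem sqrt_mul_le_div_add_mul {a b s : ℝ} (ha : 0 ≤ a) (hb : 0 ≤ b) (hs : 0 < s) :
    √(a * b) ≤ a / (2 * s) + s * b / 2 := by
  have hamgm := two_mul_le_add_sq (√a) (s * √b)
  rw [sq_sqrt ha, mul_pow, sq_sqrt hb] at hamgm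
  rw [sqrt_mul ha, div_add_div _ _ (by positivity) two_ne_zero, le_div_iff₀ (by positivity)]
  nlinarith

theorem integral_sqrt_mul_le {f g : ℝ → ℝ} {a b s : ℝ} (hab : a ≤ b)
    (hf : Continuous f) (hg : Continuous g) (hf0 : ∀ x, 0 ≤ f x) (hg0 : ∀ x, 0 ≤ g x)
    (hs : 0 < s) :
    ∫ x in a..b, √(f x * g x) ≤ (∫ x in a..b, f x) / (2 * s) + s * (∫ x in a..b, g x) / 2 := by
  calc ∫ x in a..b, √(f x * g x) ≤ ∫ x in a..b, (f x / (2 * s) + s * g x / 2) :=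
        intervalIntegral.integral_mono_on hab ((hf.mul hg).sqrt.intervalIntegrable _ _)
          (Continuous.intervalIntegrable (by fun_prop) _ _)
          fun x _ => sqrt_mul_le_div_add_mul (hf0 x) (hg0 x) hs
    _ = _ := by
        rw [intervalIntegral.integral_add ((hf.div_const _).intervalIntegrable _ _)
            ((hg.const_mul s |>.div_const _).intervalIntegrable _ _),
          intervalIntegral.integral_div, intervalIntegral.integral_div,
          intervalIntegral.integral_const_mul]

theorem integral_one_div_sqrt_pos {D : ℝ → ℝ} (hD : Continuous D) (hDpos : ∀ x, 0 < D x) :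
    0 < ∫ x in (0:ℝ)..1, 1 / √(D x) :=
  intervalIntegral.intervalIntegral_pos_of_pos
    ((continuous_const.div hD.sqrt fun x => (sqrt_pos.2 (hDpos x)).ne').intervalIntegrable _ _)
    (fun x => one_div_pos.2 (sqrt_pos.2 (hDpos x))) one_pos

def flux (q lam : ℝ) (D ψ : ℝ → ℝ) (x : ℝ) : ℝ :=
  D x * deriv ψ x + (q * deriv D x - lam * D x) * ψ x

section Flux

variable {q lam k : ℝ} {r D ψ : ℝ → ℝ}

theorem flux_periodic {c : ℝ} (hD : Function.Periodic D c) (hψ : Function.Periodic ψ c) :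
    Function.Periodic (flux q lam D ψ) c := fun x => by
  simp only [flux, hD x, hψ x, hD.deriv x, hψ.deriv x]

theorem IsEigenpair.hasDerivAt_flux (hD : ContDiff ℝ 2 D) (h : IsEigenpair q lam r D k ψ)
    (x : ℝ) : HasDerivAt (flux q lam D ψ) (lam * flux q lam D ψ x + (k - r x) * ψ x) x := by
  obtain ⟨hψ, -, -, heq⟩ := h
  have hD₁ := (hD.differentiable (by norm_num) x).hasDerivAt
  have hD₂ := (hD.differentiable_deriv_two x).hasDerivAt
  have hψ₁ := (hψ.differentiable (by norm_num) x).hasDerivAt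
  have hψ₂ := (hψ.differentiable_deriv_two x).hasDerivAt
  refine ((hD₁.mul hψ₂).add (((hD₂.const_mul q).sub (hD₁.const_mul lam)).mul hψ₁)).congr_deriv ?_
  have hx := heq x
  simp only [Lop] at hx
  simp only [flux, Pi.sub_apply]
  linear_combination hx

theorem integral_neg_flux_div (hD : ContDiff ℝ 1 D) (hDpos : ∀ x, 0 < D x)
    (hDper : Function.Periodic D 1) (hψ : ContDiff ℝ 1 ψ) (hψpos : ∀ x, 0 < ψ x)
    (hψper : Function.Periodic ψ 1) :
    ∫ x in (0:ℝ)..1, -flux q lam D ψ x / (D x * ψ x) = lam := by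
  have hD' := hD.continuous_deriv le_rfl
  have hψ' := hψ.continuous_deriv le_rfl
  have hlogD' : Continuous fun x => deriv D x / D x :=
    hD'.div hD.continuous fun x => (hDpos x).ne'
  have hlogψ' : Continuous fun x => deriv ψ x / ψ x :=
    hψ'.div hψ.continuous fun x => (hψpos x).ne'
  have hlogD := integral_div_self_eq_zero_of_periodic hDper
    (fun x => (hD.differentiable one_ne_zero x).hasDerivAt) hD' fun x => (hDpos x).ne'
  have hlogψ := integral_div_self_eq_zero_of_periodic hψper
    (fun x => (hψ.differentiable one_ne_zero x).hasDerivAt) hψ' fun x => (hψpos x).ne'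
  have hpt : ∀ x, -flux q lam D ψ x / (D x * ψ x)
      = lam - deriv ψ x / ψ x - q * (deriv D x / D x) := fun x => by
    field_simp [(hDpos x).ne', (hψpos x).ne']
    simp only [flux]
    ring
  simp_rw [hpt]
  rw [intervalIntegral.integral_sub, intervalIntegral.integral_sub,
    intervalIntegral.integral_const_mul, hlogD, hlogψ]
  · simp
  · exact intervalIntegrable_const
  · exact hlogψ'.intervalIntegrable _ _
  · exact (continuous_const.sub hlogψ').intervalIntegrable _ _
  · exact (hlogD'.const_mul q).intervalIntegrable _ _

end Flux

theorem integral_div_neg_of_hasDerivAt {N ψ : ℝ → ℝ} {lam μ : ℝ} (hμ : μ ≠ 0)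
    (hper : Function.Periodic N 1) (hN : ∀ x, HasDerivAt N (lam * N x + μ * ψ x) x)
    (hψ : Continuous ψ) (hne : ∀ x, N x ≠ 0) :
    ∫ x in (0:ℝ)..1, ψ x / -N x = lam / μ := by
  have hcont : Continuous N := continuous_iff_continuousAt.2 fun x => (hN x).continuousAt
  have hlogN := integral_div_self_eq_zero_of_periodic hper hN (by fun_prop) hne
  have hlogN' : Continuous fun x => (lam * N x + μ * ψ x) / N x :=
    (by fun_prop : Continuous fun x => lam * N x + μ * ψ x).div hcont hne
  have hpt : ∀ x, ψ x / -N x = (lam - (lam * N x + μ * ψ x) / N x) / μ := fun x => by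
    field_simp [hne x]
    ring
  simp_rw [hpt]
  rw [intervalIntegral.integral_div,
    intervalIntegral.integral_sub intervalIntegrable_const (hlogN'.intervalIntegrable _ _), hlogN]
  simp

theorem IsEigenpair.le_add_sq_div_integral {q lam k r₀ : ℝ} {D ψ : ℝ → ℝ}
    (hD : ContDiff ℝ 2 D) (hDpos : ∀ x, 0 < D x) (hDper : Function.Periodic D 1)
    (hlam : 0 < lam) (h : IsEigenpair q lam (fun _ => r₀) D k ψ) :
    k ≤ r₀ + (lam / ∫ x in (0:ℝ)..1, 1 / √(D x)) ^ 2 := by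
  set I := ∫ x in (0:ℝ)..1, 1 / √(D x) with hI_def
  rcases le_or_gt k r₀ with hk | hk
  · nlinarith [sq_nonneg (lam / I)]
  set N := flux q lam D ψ
  have hN : ∀ x, HasDerivAt N (lam * N x + (k - r₀) * ψ x) x := h.hasDerivAt_flux hD
  obtain ⟨hψ, hψpos, hψper, -⟩ := h
  have hNneg : ∀ x, N x < 0 := (flux_periodic hDper hψper).neg_of_mul_lt_deriv one_pos hlam hN
    fun x => by nlinarith [hψpos x]
  have hNc : Continuous N := continuous_iff_continuousAt.2 fun x => (hN x).continuousAt
  have hf : Continuous fun x => -N x / (D x * ψ x) :=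
    hNc.neg.div (hD.continuous.mul hψ.continuous) fun x => (mul_pos (hDpos x) (hψpos x)).ne'
  have hg : Continuous fun x => ψ x / -N x :=
    hψ.continuous.div hNc.neg fun x => (neg_pos.2 (hNneg x)).ne'
  have hsqrt : ∀ x, 1 / √(D x) = √(-N x / (D x * ψ x) * (ψ x / -N x)) := fun x => by
    have hfg : -N x / (D x * ψ x) * (ψ x / -N x) = 1 / D x := by
      field_simp [(hNneg x).ne, (hψpos x).ne']
    rw [hfg, one_div, one_div, sqrt_inv]
  set s := √(k - r₀)
  have hs : 0 < s := sqrt_pos.2 (sub_pos.2 hk)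
  have hIle : I ≤ lam / s := calc
    I = ∫ x in (0:ℝ)..1, √(-N x / (D x * ψ x) * (ψ x / -N x)) := by simp_rw [hI_def, hsqrt]
    _ ≤ (∫ x in (0:ℝ)..1, -N x / (D x * ψ x)) / (2 * s)
        + s * (∫ x in (0:ℝ)..1, ψ x / -N x) / 2 :=
      integral_sqrt_mul_le zero_le_one hf hg
        (fun x => div_nonneg (neg_nonneg.2 (hNneg x).le) (mul_pos (hDpos x) (hψpos x)).le)
        (fun x => div_nonneg (hψpos x).le (neg_nonneg.2 (hNneg x).le)) hs
    _ = lam / (2 * s) + s * (lam / s ^ 2) / 2 := by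
      rw [integral_neg_flux_div (hD.of_le (by norm_num)) hDpos hDper (hψ.of_le (by norm_num))
        hψpos hψper, integral_div_neg_of_hasDerivAt (sub_pos.2 hk).ne'
        (flux_periodic hDper hψper) hN hψ.continuous fun x => (hNneg x).ne,
        sq_sqrt (sub_pos.2 hk).le]
    _ = lam / s := by field_simp; ring
  have hI : 0 < I := integral_one_div_sqrt_pos hD.continuous hDpos
  have hsI : s ≤ lam / I := by
    rw [le_div_iff₀ hI]
    rwa [le_div_iff₀ hs, mul_comm] at hIle
  have hμ : k - r₀ ≤ (lam / I) ^ 2 := by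
    rw [← sq_sqrt (sub_pos.2 hk).le]
    exact pow_le_pow_left₀ hs.le hsI 2
  linarith

/-- Theorem `r_constant (iii)`. For constant growth rate `r₀ > 0` and
any `q`, the spreading speed is at most `2 √r₀ · a`, with `a = (∫₀¹ D^{−1/2})⁻¹` —
the maximal value, attained at `q = 1/2`. -/
theorem stmt_9 (D : ℝ → ℝ) (hD : ContDiff ℝ 2 D) (hDpos : ∀ x, 0 < D x)
    (hDper : Function.Periodic D 1) (r₀ q : ℝ) (hr₀ : 0 < r₀)
    (k : ℝ → ℝ) (ψ : ℝ → ℝ → ℝ)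
    (hk : ∀ lam > (0 : ℝ), IsEigenpair q lam (fun _ => r₀) D (k lam) (ψ lam)) :
    speed k ≤
      ((2 * Real.sqrt r₀ * (∫ t in (0:ℝ)..1, 1 / Real.sqrt (D t))⁻¹ : ℝ) : EReal) := by
  set I := ∫ t in (0:ℝ)..1, 1 / √(D t)
  have hI : 0 < I := integral_one_div_sqrt_pos hD.continuous hDpos
  set lam := √r₀ * I
  have hlam : 0 < lam := mul_pos (sqrt_pos.2 hr₀) hI
  have hk_le : k lam ≤ 2 * r₀ := by
    have := (hk lam hlam).le_add_sq_div_integral hD hDpos hDper hlam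
    rwa [mul_div_cancel_right₀ _ hI.ne', sq_sqrt hr₀.le, ← two_mul] at this
  calc speed k ≤ ((k lam / lam : ℝ) : EReal) :=
        iInf_le (fun l : {l : ℝ // 0 < l} => ((k l.1 / l.1 : ℝ) : EReal)) ⟨lam, hlam⟩
    _ ≤ ((2 * r₀ / lam : ℝ) : EReal) := by gcongr
    _ = ((2 * √r₀ * I⁻¹ : ℝ) : EReal) := by
        congr 1
        rw [div_eq_iff hlam.ne']
        field_simp
        linear_combination -I * mul_self_sqrt hr₀.le
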